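/- Every quiver which is a non-oriented cycle and is not simply-laced (i.e. some edge has weight at least 2) is of infinite mutation type. -/

import Mathlib

open scoped Classical

/-- A quiver is encoded by its skew-symmetric exchange matrix. -/
def IsSkewQ {n : ℕ} (B : Matrix (Fin n) (Fin n) ℤ) : Prop :=
  ∀ i j, B j i = - B i j

/-- Fomin-Zelevinsky mutation of a skew-symmetric matrix at vertex `k`. -/
def mutate {n : ℕ} (B : Matrix (Fin n) (Fin n) ℤ) (k : Fin n) : Matrix (Fin n) (Fin n) ℤ :=
  Matrix.of fun i j =>
    if i = k ∨ j = k then - B i j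
    else B i j + Int.sign (B i k) * max (B i k * B k j) 0

def mutateList {n : ℕ} (B : Matrix (Fin n) (Fin n) ℤ) (l : List (Fin n)) :
    Matrix (Fin n) (Fin n) ℤ :=
  l.foldl mutate B

/-- `C` is obtained from `B` by a finite sequence of mutations followed by a
simultaneous relabeling of the index set. -/
def MutEquiv {n m : ℕ} (B : Matrix (Fin n) (Fin n) ℤ) (C : Matrix (Fin m) (Fin m) ℤ) : Prop :=
  ∃ (l : List (Fin n)) (σ : Fin m ≃ Fin n), C = (mutateList B l).submatrix ⇑σ ⇑σ

/-- Finite mutation type: the mutation class is finite. -/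
def FiniteMutationType {n : ℕ} (B : Matrix (Fin n) (Fin n) ℤ) : Prop :=
  {C : Matrix (Fin n) (Fin n) ℤ | MutEquiv B C}.Finite

/-- The underlying undirected graph of the quiver. -/
def quiverGraph {n : ℕ} (B : Matrix (Fin n) (Fin n) ℤ) : SimpleGraph (Fin n) where
  Adj i j := i ≠ j ∧ (B i j ≠ 0 ∨ B j i ≠ 0)
  symm := ⟨fun i j h => ⟨h.1.symm, h.2.symm⟩⟩
  loopless := ⟨fun i h => h.1 rfl⟩

def ConnectedQ {n : ℕ} (B : Matrix (Fin n) (Fin n) ℤ) : Prop :=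
  (quiverGraph B).Connected

def SimplyLaced {n : ℕ} (B : Matrix (Fin n) (Fin n) ℤ) : Prop :=
  ∀ i j, |B i j| ≤ 1

/-- The quiver (matrix) is a cycle: the vertices can be labeled by `ZMod m` so that
adjacency is exactly between consecutive labels. -/
def IsCycleMat {m : ℕ} (C : Matrix (Fin m) (Fin m) ℤ) : Prop :=
  3 ≤ m ∧ ∃ ρ : ZMod m ≃ Fin m, ∀ i j : ZMod m,
    C (ρ i) (ρ j) ≠ 0 ↔ (j = i + 1 ∨ i = j + 1)

/-- The quiver is an oriented cycle. -/
def IsOrientedCycleMat {m : ℕ} (C : Matrix (Fin m) (Fin m) ℤ) : Prop :=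
  3 ≤ m ∧ ∃ ρ : ZMod m ≃ Fin m,
    (∀ i j : ZMod m, C (ρ i) (ρ j) ≠ 0 ↔ (j = i + 1 ∨ i = j + 1)) ∧
    (∀ i : ZMod m, 0 < C (ρ i) (ρ (i + 1)))

def IsNonOrientedCycleMat {m : ℕ} (C : Matrix (Fin m) (Fin m) ℤ) : Prop :=
  IsCycleMat C ∧ ¬ IsOrientedCycleMat C

/-- A double edge: two vertices joined by an edge of weight 2. -/
def IsDoubleEdgeMat {m : ℕ} (C : Matrix (Fin m) (Fin m) ℤ) : Prop :=
  m = 2 ∧ ∃ i j : Fin m, i ≠ j ∧ (C i j = 2 ∨ C i j = -2)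

/-- The Dynkin tree D4: a center joined by single edges (arbitrarily oriented) to
three pairwise non-adjacent vertices. -/
def IsD4Mat {m : ℕ} (C : Matrix (Fin m) (Fin m) ℤ) : Prop :=
  m = 4 ∧ ∃ c : Fin m,
    (∀ i, i ≠ c → (C c i = 1 ∨ C c i = -1)) ∧
    (∀ i j, i ≠ c → j ≠ c → i ≠ j → C i j = 0)

/-- Two adjacent oriented simply-laced triangles sharing the edge `{c,d}`,
with `a`, `b` non-adjacent. -/
def IsTwoTrianglesMat {m : ℕ} (C : Matrix (Fin m) (Fin m) ℤ) : Prop :=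
  m = 4 ∧ ∃ a b c d : Fin m,
    a ≠ b ∧ a ≠ c ∧ a ≠ d ∧ b ≠ c ∧ b ≠ d ∧ c ≠ d ∧
    C a b = 0 ∧ C b a = 0 ∧
    C a c = 1 ∧ C c d = 1 ∧ C d a = 1 ∧ C b c = 1 ∧ C d b = 1

/-- Basic quivers: D4, two adjacent oriented triangles, or a simply-laced
oriented cycle with at least 4 vertices. -/
def IsBasicMat {m : ℕ} (C : Matrix (Fin m) (Fin m) ℤ) : Prop :=
  IsD4Mat C ∨ IsTwoTrianglesMat C ∨
    (4 ≤ m ∧ (∀ i j, |C i j| ≤ 1) ∧ IsOrientedCycleMat C)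

def HasBasicSubquiver {n : ℕ} (B : Matrix (Fin n) (Fin n) ℤ) : Prop :=
  ∃ (m : ℕ) (f : Fin m ↪ Fin n), IsBasicMat (B.submatrix ⇑f ⇑f)

/-- Build a skew-symmetric matrix from a list of weighted arrows. -/
def ofEdges (n : ℕ) (E : List (Fin n × Fin n × ℤ)) : Matrix (Fin n) (Fin n) ℤ :=
  Matrix.of fun i j =>
    E.foldl (fun acc e =>
      acc + (if e.1 = i ∧ e.2.1 = j then e.2.2 else 0)
          + (if e.1 = j ∧ e.2.1 = i then - e.2.2 else 0)) 0

def E6mat : Matrix (Fin 6) (Fin 6) ℤ :=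
  ofEdges 6 [(0,1,1),(1,2,1),(2,3,1),(3,4,1),(2,5,1)]

def E7mat : Matrix (Fin 7) (Fin 7) ℤ :=
  ofEdges 7 [(0,1,1),(1,2,1),(2,3,1),(3,4,1),(4,5,1),(2,6,1)]

def E8mat : Matrix (Fin 8) (Fin 8) ℤ :=
  ofEdges 8 [(0,1,1),(1,2,1),(2,3,1),(3,4,1),(4,5,1),(5,6,1),(2,7,1)]

def E6affMat : Matrix (Fin 7) (Fin 7) ℤ :=
  ofEdges 7 [(0,1,1),(1,2,1),(2,3,1),(3,4,1),(2,5,1),(5,6,1)]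

def E7affMat : Matrix (Fin 8) (Fin 8) ℤ :=
  ofEdges 8 [(0,1,1),(1,2,1),(2,3,1),(3,4,1),(4,5,1),(5,6,1),(3,7,1)]

def E8affMat : Matrix (Fin 9) (Fin 9) ℤ :=
  ofEdges 9 [(0,1,1),(1,2,1),(2,3,1),(3,4,1),(4,5,1),(5,6,1),(6,7,1),(2,8,1)]

/-- E6^(1,1): core b₁=0, b₂=1 (weight-2 arrow b₁→b₂), a₁=2, a₂=3, a₃=4 in oriented
triangles, with one extra path vertex attached at each aᵢ. -/
def E611Mat : Matrix (Fin 8) (Fin 8) ℤ :=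
  ofEdges 8 [(0,1,2),(2,0,1),(1,2,1),(3,0,1),(1,3,1),(4,0,1),(1,4,1),(2,5,1),(3,6,1),(4,7,1)]

def E711Mat : Matrix (Fin 9) (Fin 9) ℤ :=
  ofEdges 9 [(0,1,2),(2,0,1),(1,2,1),(3,0,1),(1,3,1),(4,0,1),(1,4,1),
             (2,5,1),(5,6,1),(4,7,1),(7,8,1)]

def E811Mat : Matrix (Fin 10) (Fin 10) ℤ :=
  ofEdges 10 [(0,1,2),(2,0,1),(1,2,1),(3,0,1),(1,3,1),(4,0,1),(1,4,1),
              (2,5,1),(4,6,1),(6,7,1),(7,8,1),(8,9,1)]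

/-- X6: c=0, a₁=1, a₂=2, b₁=3, b₂=4, d=5. -/
def X6mat : Matrix (Fin 6) (Fin 6) ℤ :=
  ofEdges 6 [(0,1,1),(2,0,1),(0,3,1),(4,0,1),(1,2,2),(3,4,2),(0,5,1)]

/-- X7: c=0, aᵢ=1,3,5, a′ᵢ=2,4,6. -/
def X7mat : Matrix (Fin 7) (Fin 7) ℤ :=
  ofEdges 7 [(0,1,1),(1,2,2),(2,0,1),(0,3,1),(3,4,2),(4,0,1),(0,5,1),(5,6,2),(6,0,1)]

/-- The kernel of B mod 2. -/
def Vbar0 {n : ℕ} (B : Matrix (Fin n) (Fin n) ℤ) : Submodule (ZMod 2) (Fin n → ZMod 2) :=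
  LinearMap.ker (Matrix.mulVecLin (B.map (fun x : ℤ => (x : ZMod 2))))

/-- A basic radical vector: a mod-2 radical vector whose support has exactly two
vertices or is a cycle. -/
def IsBasicRadical {n : ℕ} (B : Matrix (Fin n) (Fin n) ℤ) (u : Fin n → ZMod 2) : Prop :=
  u ∈ Vbar0 B ∧
    ({i | u i ≠ 0}.ncard = 2 ∨
      ∃ (m : ℕ) (f : Fin m ↪ Fin n),
        Set.range ⇑f = {i | u i ≠ 0} ∧ IsCycleMat (B.submatrix ⇑f ⇑f))

/-- The span of the basic radical vectors. -/
def Vbar00 {n : ℕ} (B : Matrix (Fin n) (Fin n) ℤ) : Submodule (ZMod 2) (Fin n → ZMod 2) :=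
  Submodule.span (ZMod 2) {u | IsBasicRadical B u}

/-!
Read the cycle through its arrow weights `w i = B i (i + 1)`: it is non-oriented exactly when the
weights take both signs. If two consecutive arrows `i → i + 1 → i + 2` point the same way,
mutating at `i + 1` and deleting it leaves a shorter non-oriented cycle whose new arrow
`i → i + 2` has weight `w i * w (i + 1)`, so a heavy arrow survives. If no two consecutive arrows
agree, every vertex is a source or a sink, and mutating at one of them creates such a pair.

This leaves a triangle with a path `1 → 2 → 0` and an arrow `1 → 0`; mutating at `2` makes it
cyclic, with weights `x ≥ 2` on `0 → 1` and `y, z > 0`. Alternating mutations at `1` and `0`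
then fix `x` and run the recurrence `s ↦ x * s - s'` on the other two weights, which grows
without bound unless `x = 2` and `y = z`.
Unbounded entries are impossible in a finite mutation class.
-/

section Mutation

variable {n : ℕ}

lemma mutateList_append (B : Matrix (Fin n) (Fin n) ℤ) (l l' : List (Fin n)) :
    mutateList B (l ++ l') = mutateList (mutateList B l) l' :=
  List.foldl_append

lemma sign_mul_max_mul_zero (a b : ℤ) :
    a.sign * max (a * b) 0 = if 0 < a * b then |a| * b else 0 := by
  split_ifs with h
  · rw [max_eq_left h.le, ← mul_assoc, Int.sign_mul_self_eq_abs]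
  · rw [max_eq_right (not_lt.mp h), mul_zero]

lemma mutate_apply (B : Matrix (Fin n) (Fin n) ℤ) (k i j : Fin n) :
    mutate B k i j = if i = k ∨ j = k then -B i j
      else B i j + if 0 < B i k * B k j then |B i k| * B k j else 0 := by
  simp only [mutate, Matrix.of_apply, sign_mul_max_mul_zero]

lemma mutate_neg (B : Matrix (Fin n) (Fin n) ℤ) (k : Fin n) : mutate (-B) k = -mutate B k := by
  ext i j
  simp only [mutate_apply, Matrix.neg_apply, neg_mul_neg, abs_neg]
  split_ifs <;> ring

lemma mutateList_neg (B : Matrix (Fin n) (Fin n) ℤ) (l : List (Fin n)) :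
    mutateList (-B) l = -mutateList B l := by
  induction l generalizing B with
  | nil => rfl
  | cons k l ih => exact (congrArg (mutateList · l) (mutate_neg B k)).trans (ih _)

lemma mutate_submatrix {m : ℕ} (B : Matrix (Fin n) (Fin n) ℤ) {f : Fin m → Fin n}
    (hf : Function.Injective f) (k : Fin m) :
    mutate (B.submatrix f f) k = (mutate B (f k)).submatrix f f := by
  ext i j
  simp only [mutate, Matrix.submatrix_apply, Matrix.of_apply, hf.eq_iff]

lemma mutateList_submatrix {m : ℕ} (B : Matrix (Fin n) (Fin n) ℤ) {f : Fin m → Fin n}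
    (hf : Function.Injective f) (l : List (Fin m)) :
    mutateList (B.submatrix f f) l = (mutateList B (l.map f)).submatrix f f := by
  induction l generalizing B with
  | nil => rfl
  | cons k l ih => exact (congrArg (mutateList · l) (mutate_submatrix B hf k)).trans (ih _)

lemma mutate_eq_of_mul_nonpos {B : Matrix (Fin n) (Fin n) ℤ} {k : Fin n}
    (h : ∀ i j, B i k * B k j ≤ 0) :
    mutate B k = Matrix.of fun i j => if i = k ∨ j = k then -B i j else B i j := by
  ext i j
  simp only [mutate_apply, not_lt.mpr (h i j), if_false, add_zero, Matrix.of_apply]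

end Mutation

lemma mutEquiv_mutateList {n : ℕ} (B : Matrix (Fin n) (Fin n) ℤ) (l : List (Fin n)) :
    MutEquiv B (mutateList B l) :=
  ⟨l, Equiv.refl _, (Matrix.submatrix_id_id _).symm⟩

namespace FiniteMutationType

variable {n : ℕ} {B : Matrix (Fin n) (Fin n) ℤ}

theorem mutate (h : FiniteMutationType B) (k : Fin n) : FiniteMutationType (mutate B k) :=
  h.subset fun _ ⟨l, σ, hC⟩ => ⟨k :: l, σ, hC⟩

theorem neg (h : FiniteMutationType B) : FiniteMutationType (-B) := by
  refine (h.image Neg.neg).subset ?_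
  rintro _ ⟨l, σ, rfl⟩
  exact ⟨_, ⟨l, σ, rfl⟩, by rw [mutateList_neg]; rfl⟩

theorem submatrix {m : ℕ} (h : FiniteMutationType B) {f : Fin m → Fin n}
    (hf : Function.Injective f) : FiniteMutationType (B.submatrix f f) := by
  refine ((h.prod (Set.finite_univ (α := Fin m → Fin n))).image
    fun p => p.1.submatrix p.2 p.2).subset ?_
  rintro _ ⟨l, σ, rfl⟩
  refine ⟨(mutateList B (l.map f), f ∘ σ), ⟨mutEquiv_mutateList B _, trivial⟩, ?_⟩
  simp only [mutateList_submatrix B hf, Matrix.submatrix_submatrix]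

theorem exists_forall_mutateList_le (h : FiniteMutationType B) :
    ∃ N, ∀ l i j, mutateList B l i j ≤ N := by
  obtain ⟨N, hN⟩ := ((h.prod (Set.finite_univ (α := Fin n × Fin n))).image
    fun p => p.1 p.2.1 p.2.2).bddAbove
  exact ⟨N, fun l i j => hN ⟨(_, (i, j)), ⟨mutEquiv_mutateList B l, trivial⟩, rfl⟩⟩

end FiniteMutationType

section Cycle

variable {n : ℕ} [NeZero n]

def cycleMatrix (w : Fin n → ℤ) : Matrix (Fin n) (Fin n) ℤ :=
  Matrix.of fun i j => if j = i + 1 then w i else if i = j + 1 then -w j else 0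

lemma neg_cycleMatrix (w : Fin n → ℤ) : -cycleMatrix w = cycleMatrix (-w) := by
  ext i j
  simp only [cycleMatrix, Matrix.neg_apply, Matrix.of_apply, Pi.neg_apply]
  split_ifs <;> simp

lemma cycleMatrix_submatrix_add (w : Fin n → ℤ) (r : Fin n) :
    (cycleMatrix w).submatrix (· + r) (· + r) = cycleMatrix fun i => w (i + r) := by
  ext i j
  simp only [cycleMatrix, Matrix.submatrix_apply, Matrix.of_apply, add_right_comm _ r 1,
    add_left_inj]

lemma mutate_cycleMatrix_of_mul_neg {w : Fin n → ℤ} {k : Fin n} (hk : w k * w (k + 1) < 0) :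
    mutate (cycleMatrix w) (k + 1) =
      cycleMatrix fun i => if i = k ∨ i = k + 1 then -w i else w i := by
  rw [mutate_eq_of_mul_nonpos]
  · ext i j
    simp only [cycleMatrix, Matrix.of_apply]
    split_ifs <;> grind
  · intro i j
    simp only [cycleMatrix, Matrix.of_apply, add_left_inj]
    split_ifs <;> subst_vars <;> first | nlinarith | simp [mul_self_nonneg]

end Cycle

def contractLast {n : ℕ} (w : Fin (n + 2) → ℤ) : Fin (n + 1) → ℤ := fun i =>
  if i = Fin.last n then w (Fin.last n).castSucc * w (Fin.last (n + 1)) else w i.castSucc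

lemma mutate_cycleMatrix_last_submatrix_castSucc {n : ℕ} (hn : 2 ≤ n) {w : Fin (n + 2) → ℤ}
    (hu : 0 < w (Fin.last n).castSucc) (hv : 0 < w (Fin.last (n + 1))) :
    (mutate (cycleMatrix w) (Fin.last (n + 1))).submatrix Fin.castSucc Fin.castSucc =
      cycleMatrix (contractLast w) := by
  -- Reading the weights by position turns every case below into arithmetic on indices.
  obtain ⟨W, hW⟩ : ∃ W : ℕ → ℤ, ∀ a, w a = W a :=
    ⟨fun a => if h : a < n + 2 then w ⟨a, h⟩ else 0, fun a => by simp⟩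
  simp only [hW, Fin.val_castSucc, Fin.val_last] at hu hv
  ext i j
  have hi : (i : ℕ) ≠ n + 1 := i.is_lt.ne
  have hj : (j : ℕ) ≠ n + 1 := j.is_lt.ne
  simp only [Matrix.submatrix_apply, mutate_apply, cycleMatrix, Matrix.of_apply, contractLast,
    Fin.ext_iff, Fin.val_add_one, Fin.val_castSucc, Fin.val_last, hW]
  simp only [hi, hj, if_true, if_false, or_self]
  generalize (i : ℕ) = a at *
  generalize (j : ℕ) = b at *
  split_ifs <;> subst_vars <;>
  first | omega | nlinarith | (simp only [abs_neg, abs_of_pos hu, abs_of_pos hv]; ring)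

lemma cycleMatrix_fin_three (x y z : ℤ) :
    cycleMatrix ![x, y, z] = !![0, x, -z; -x, 0, y; z, -y, 0] := by
  ext i j; fin_cases i <;> fin_cases j <;> simp [cycleMatrix]

lemma mutate_triangle_one {x y : ℤ} (z : ℤ) (hx : 0 < x) (hy : 0 < y) :
    mutate (cycleMatrix ![x, y, z]) 1 = -cycleMatrix ![x, y, x * y - z] := by
  ext i j
  simp only [cycleMatrix_fin_three, mutate_apply]
  fin_cases i <;> fin_cases j <;> simp [abs_of_pos, hx, hy] <;> intros <;> nlinarith

lemma mutate_triangle_zero {x z : ℤ} (y : ℤ) (hx : 0 < x) (hz : 0 < z) :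
    mutate (cycleMatrix ![x, y, z]) 0 = -cycleMatrix ![x, z * x - y, z] := by
  ext i j
  simp only [cycleMatrix_fin_three, mutate_apply]
  fin_cases i <;> fin_cases j <;> simp [abs_of_pos, hx, hz] <;> intros <;> nlinarith

lemma mutate_triangle_two {y z : ℤ} (x : ℤ) (hy : 0 < y) (hz : 0 < z) :
    mutate (cycleMatrix ![x, y, z]) 2 = -cycleMatrix ![y * z - x, y, z] := by
  ext i j
  simp only [cycleMatrix_fin_three, mutate_apply]
  fin_cases i <;> fin_cases j <;> simp [abs_of_pos, hy, hz] <;> intros <;> nlinarith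

lemma mutateList_triangle_one_zero {x y z : ℤ} (hx : 0 < x) (hy : 0 < y) (hz : z < x * y) :
    mutateList (cycleMatrix ![x, y, z]) [1, 0] =
      cycleMatrix ![x, (x * y - z) * x - y, x * y - z] := by
  change mutate (mutate _ 1) 0 = _
  rw [mutate_triangle_one z hx hy, mutate_neg, mutate_triangle_zero y hx (by linarith), neg_neg]

lemma exists_mutateList_triangle_ge {x y z : ℤ} (hx : 2 ≤ x) (hz : 0 < z) (hzy : z ≤ y)
    (h : z < y ∨ 3 ≤ x) (N : ℕ) : ∃ l y' z',
      mutateList (cycleMatrix ![x, y, z]) l = cycleMatrix ![x, y', z'] ∧ y + N ≤ y' := by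
  induction N generalizing y z with
  | zero => exact ⟨[], y, z, rfl, by simp⟩
  | succ N ih =>
    have hy₁ : y < x * y - z := by rcases h with h | h <;> nlinarith
    have hz₁ : x * y - z < (x * y - z) * x - y := by nlinarith
    obtain ⟨l, y', z', hl, hy'⟩ := ih (by linarith) hz₁.le (Or.inl hz₁)
    refine ⟨[1, 0] ++ l, y', z', ?_, by push_cast; linarith⟩
    rw [mutateList_append, mutateList_triangle_one_zero (by linarith) (by linarith) (by linarith),
      hl]

theorem not_finiteMutationType_triangle_of_le {x y z : ℤ} (hx : 2 ≤ x) (hz : 0 < z)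
    (hzy : z ≤ y) (h : z < y ∨ 3 ≤ x) : ¬ FiniteMutationType (cycleMatrix ![x, y, z]) := by
  intro hfin
  obtain ⟨N, hN⟩ := hfin.exists_forall_mutateList_le
  obtain ⟨l, y', z', hl, hy'⟩ := exists_mutateList_triangle_ge hx hz hzy h ((N - y).toNat + 1)
  have hle := hN l 1 2
  rw [hl] at hle
  simp [cycleMatrix] at hle
  omega

theorem not_finiteMutationType_triangle {x y z : ℤ} (hx : 2 ≤ x) (hz : 0 < z)
    (h : y ≠ z ∨ 3 ≤ x) : ¬ FiniteMutationType (cycleMatrix ![x, y, z]) := by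
  intro hfin
  rcases le_or_gt z y with hzy | hyz
  · exact not_finiteMutationType_triangle_of_le hx hz hzy (by omega) hfin
  · have h₀ := (hfin.mutate 0).neg
    rw [mutate_triangle_zero y (by linarith) hz, neg_neg] at h₀
    exact not_finiteMutationType_triangle_of_le hx hz (by nlinarith) (Or.inl (by nlinarith)) h₀

/-- The arrow weights of a cycle that is non-oriented and not simply-laced. -/
structure MixedHeavy {ι : Type*} (w : ι → ℤ) : Prop where
  ne_zero : ∀ i, w i ≠ 0
  exists_pos : ∃ i, 0 < w i
  exists_neg : ∃ i, w i < 0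
  exists_two_le_abs : ∃ i, 2 ≤ |w i|

namespace MixedHeavy

variable {ι κ : Type*} {w : ι → ℤ}

theorem of_dominated {w' : κ → ℤ} (hw : MixedHeavy w) (h₀ : ∀ j, w' j ≠ 0)
    (h : ∀ i, ∃ j, 0 < w i * w' j ∧ |w i| ≤ |w' j|) : MixedHeavy w' where
  ne_zero := h₀
  exists_pos :=
    let ⟨i, hi⟩ := hw.exists_pos
    let ⟨j, hj, _⟩ := h i
    ⟨j, pos_of_mul_pos_right hj hi.le⟩
  exists_neg :=
    let ⟨i, hi⟩ := hw.exists_neg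
    let ⟨j, hj, _⟩ := h i
    ⟨j, neg_of_mul_pos_right hj hi.le⟩
  exists_two_le_abs :=
    let ⟨i, hi⟩ := hw.exists_two_le_abs
    let ⟨j, _, hj⟩ := h i
    ⟨j, hi.trans hj⟩

theorem comp_equiv (hw : MixedHeavy w) (e : κ ≃ ι) : MixedHeavy (w ∘ e) :=
  hw.of_dominated (fun j => hw.ne_zero (e j)) fun i =>
    ⟨e.symm i, by simpa using mul_self_pos.mpr (hw.ne_zero i)⟩

theorem neg (hw : MixedHeavy w) : MixedHeavy (-w) where
  ne_zero i := neg_ne_zero.mpr (hw.ne_zero i)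
  exists_pos := let ⟨i, hi⟩ := hw.exists_neg; ⟨i, neg_pos.mpr hi⟩
  exists_neg := let ⟨i, hi⟩ := hw.exists_pos; ⟨i, neg_neg_iff_pos.mpr hi⟩
  exists_two_le_abs := let ⟨i, hi⟩ := hw.exists_two_le_abs; ⟨i, by simpa using hi⟩

theorem neg_pair [DecidableEq ι] (hw : MixedHeavy w) {a b : ι} (hab : w a * w b < 0) :
    MixedHeavy fun i => if i = a ∨ i = b then -w i else w i := by
  have hba : b ≠ a := by rintro rfl; nlinarith
  refine ⟨fun i => ?_, ?_, ?_, ?_⟩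
  · split_ifs <;> simp [hw.ne_zero i]
  · rcases lt_or_gt_of_ne (hw.ne_zero a) with ha | ha
    · exact ⟨a, by simpa using ha⟩
    · exact ⟨b, by simp [hba]; nlinarith⟩
  · rcases lt_or_gt_of_ne (hw.ne_zero a) with ha | ha
    · exact ⟨b, by simp [hba]; nlinarith⟩
    · exact ⟨a, by simpa using ha⟩
  · obtain ⟨i, hi⟩ := hw.exists_two_le_abs
    exact ⟨i, by split_ifs <;> simpa using hi⟩

end MixedHeavy

theorem exists_mixedHeavy_mul_pos {n : ℕ} [NeZero n] (hn : 3 ≤ n) {w : Fin n → ℤ}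
    (hw : MixedHeavy w) :
    ∃ w' : Fin n → ℤ, MixedHeavy w' ∧ (∃ k, 0 < w' k * w' (k + 1)) ∧
      (FiniteMutationType (cycleMatrix w) → FiniteMutationType (cycleMatrix w')) := by
  by_cases h : ∃ k, 0 < w k * w (k + 1)
  · exact ⟨w, hw, h, id⟩
  simp only [not_exists, not_lt] at h
  have hneg k : w k * w (k + 1) < 0 :=
    (h k).lt_of_ne (mul_ne_zero (hw.ne_zero _) (hw.ne_zero _))
  have h₂ : (0 + 1 + 1 : Fin n) ≠ 0 ∧ (0 + 1 + 1 : Fin n) ≠ 0 + 1 := by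
    simp only [zero_add, ne_eq, Fin.ext_iff, Fin.val_add, Fin.val_one', Fin.val_zero,
      Nat.mod_eq_of_lt (show 1 < n by omega)]
    constructor <;> rw [Nat.mod_eq_of_lt (by omega)] <;> omega
  refine ⟨_, hw.neg_pair (hneg 0), ⟨0 + 1, ?_⟩, fun hf => ?_⟩
  · rw [if_pos (Or.inr rfl), if_neg (not_or.mpr h₂)]
    nlinarith [hneg (0 + 1)]
  · rw [← mutate_cycleMatrix_of_mul_neg (hneg 0)]
    exact hf.mutate _

theorem exists_mixedHeavy_pos_last {n : ℕ} (hn : 1 ≤ n) {w : Fin (n + 2) → ℤ}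
    (hw : MixedHeavy w) :
    ∃ w' : Fin (n + 2) → ℤ, MixedHeavy w' ∧ 0 < w' (Fin.last n).castSucc ∧
      0 < w' (Fin.last (n + 1)) ∧
      (FiniteMutationType (cycleMatrix w) → FiniteMutationType (cycleMatrix w')) := by
  obtain ⟨w₁, hw₁, ⟨k, hk⟩, hf₁⟩ := exists_mixedHeavy_mul_pos (by omega) hw
  set r := k - (Fin.last n).castSucc
  have hu : (Fin.last n).castSucc + r = k := add_sub_cancel _ _
  have hv : Fin.last (n + 1) + r = k + 1 := by
    rw [← Fin.succ_last, ← Fin.coeSucc_eq_succ, ← hu]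
    abel
  have hrot (hf : FiniteMutationType (cycleMatrix w₁)) :
      FiniteMutationType (cycleMatrix fun i => w₁ (i + r)) := by
    simpa [cycleMatrix_submatrix_add] using hf.submatrix (add_left_injective r)
  have hrot_mh : MixedHeavy fun i => w₁ (i + r) := hw₁.comp_equiv (Equiv.addRight r)
  rcases lt_or_gt_of_ne (hw₁.ne_zero k) with hk₀ | hk₀
  · refine ⟨-fun i => w₁ (i + r), hrot_mh.neg, ?_, ?_, fun hf => ?_⟩
    · simpa [hu] using hk₀
    · simp only [Pi.neg_apply, hv, neg_pos]; nlinarith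
    · rw [← neg_cycleMatrix]; exact (hrot (hf₁ hf)).neg
  · exact ⟨_, hrot_mh, by simpa [hu] using hk₀, by simp only [hv]; nlinarith, hrot ∘ hf₁⟩

theorem mixedHeavy_contractLast {n : ℕ} {w : Fin (n + 2) → ℤ} (hw : MixedHeavy w)
    (hu : 0 < w (Fin.last n).castSucc) (hv : 0 < w (Fin.last (n + 1))) :
    MixedHeavy (contractLast w) := by
  have hlast : contractLast w (Fin.last n) = w (Fin.last n).castSucc * w (Fin.last (n + 1)) :=
    if_pos rfl
  refine hw.of_dominated (fun j => ?_) (Fin.lastCases ?_ fun i => ?_)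
  · unfold contractLast
    split_ifs
    · positivity
    · exact hw.ne_zero _
  · refine ⟨Fin.last n, ?_⟩
    rw [hlast, abs_of_pos hv, abs_of_pos (mul_pos hu hv)]
    exact ⟨mul_pos hv (mul_pos hu hv), by nlinarith⟩
  · by_cases hi : i = Fin.last n
    · subst hi
      refine ⟨Fin.last n, ?_⟩
      rw [hlast, abs_of_pos hu, abs_of_pos (mul_pos hu hv)]
      exact ⟨mul_pos hu (mul_pos hu hv), by nlinarith⟩
    · refine ⟨i, ?_⟩
      rw [contractLast, if_neg hi]
      exact ⟨mul_self_pos.mpr (hw.ne_zero _), le_rfl⟩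

theorem not_finiteMutationType_cycleMatrix_three {w : Fin 3 → ℤ} (hw : MixedHeavy w)
    (h₁ : 0 < w 1) (h₂ : 0 < w 2) : ¬ FiniteMutationType (cycleMatrix w) := by
  have hfin3 (i : Fin 3) : i = 0 ∨ i = 1 ∨ i = 2 := by fin_cases i <;> simp
  have h₀ : w 0 < 0 := by
    obtain ⟨i, hi⟩ := hw.exists_neg
    rcases hfin3 i with rfl | rfl | rfl <;> linarith
  have hw₃ : w = ![w 0, w 1, w 2] := by ext i; fin_cases i <;> rfl
  intro hfin
  have h := (hfin.mutate 2).neg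
  rw [hw₃, mutate_triangle_two _ h₁ h₂, neg_neg] at h
  refine not_finiteMutationType_triangle (by nlinarith) h₂ ?_ h
  by_contra! hc
  obtain ⟨i, hi⟩ := hw.exists_two_le_abs
  rcases hfin3 i with rfl | rfl | rfl <;>
    simp only [abs_of_neg h₀, abs_of_pos h₁, abs_of_pos h₂] at hi <;> nlinarith

theorem not_finiteMutationType_cycleMatrix {n : ℕ} (hn : 1 ≤ n) {w : Fin (n + 2) → ℤ}
    (hw : MixedHeavy w) : ¬ FiniteMutationType (cycleMatrix w) := by
  induction n, hn using Nat.le_induction with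
  | base =>
    obtain ⟨w', hw', hu, hv, hf⟩ := exists_mixedHeavy_pos_last le_rfl hw
    exact fun hfin => not_finiteMutationType_cycleMatrix_three hw' hu hv (hf hfin)
  | succ n hn ih =>
    obtain ⟨w', hw', hu, hv, hf⟩ := exists_mixedHeavy_pos_last (by omega) hw
    intro hfin
    have h := ((hf hfin).mutate (Fin.last _)).submatrix (Fin.castSucc_injective _)
    rw [mutate_cycleMatrix_last_submatrix_castSucc (by omega) hu hv] at h
    exact ih (mixedHeavy_contractLast hw' hu hv) h

section CycleQuiver

variable {m : ℕ} {B : Matrix (Fin m) (Fin m) ℤ}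

lemma submatrix_eq_cycleMatrix [NeZero m] (hB : IsSkewQ B) {e : Fin m → Fin m}
    (he : ∀ i j, B (e i) (e j) ≠ 0 ↔ (j = i + 1 ∨ i = j + 1)) :
    B.submatrix e e = cycleMatrix fun i => B (e i) (e (i + 1)) := by
  ext i j
  simp only [Matrix.submatrix_apply, cycleMatrix, Matrix.of_apply]
  split_ifs with h₁ h₂
  · rw [h₁]
  · rw [h₂, hB]
  · exact not_not.mp fun h => by rcases (he i j).mp h with h | h <;> contradiction

lemma isOrientedCycleMat_of_forall_neg (hB : IsSkewQ B) (hm : 3 ≤ m) (ρ : ZMod m ≃ Fin m)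
    (hadj : ∀ i j, B (ρ i) (ρ j) ≠ 0 ↔ (j = i + 1 ∨ i = j + 1))
    (hneg : ∀ i, B (ρ i) (ρ (i + 1)) < 0) : IsOrientedCycleMat B := by
  refine ⟨hm, (Equiv.neg _).trans ρ, fun i j => ?_, fun i => ?_⟩
  · simp only [Equiv.trans_apply, Equiv.neg_apply, hadj]
    constructor <;> rintro (h | h) <;> [right; left; right; left] <;> linear_combination h
  · have h := hneg (-i - 1)
    rw [sub_add_cancel] at h
    change 0 < B (ρ (-i)) (ρ (-(i + 1)))
    rw [neg_add', hB]
    linarith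

lemma mixedHeavy_of_isNonOrientedCycleMat (hB : IsSkewQ B) (hm : 3 ≤ m) (ρ : ZMod m ≃ Fin m)
    (hadj : ∀ i j, B (ρ i) (ρ j) ≠ 0 ↔ (j = i + 1 ∨ i = j + 1))
    (hnor : ¬ IsOrientedCycleMat B) (hw : ∃ i j, 2 ≤ |B i j|) :
    MixedHeavy fun i => B (ρ i) (ρ (i + 1)) := by
  have hne i : B (ρ i) (ρ (i + 1)) ≠ 0 := (hadj _ _).mpr (Or.inl rfl)
  refine ⟨hne, ?_, ?_, ?_⟩
  · by_contra! h
    exact hnor (isOrientedCycleMat_of_forall_neg hB hm ρ hadj fun i => (h i).lt_of_ne (hne i))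
  · by_contra! h
    exact hnor ⟨hm, ρ, hadj, fun i => (h i).lt_of_ne' (hne i)⟩
  · obtain ⟨i, j, hij⟩ := hw
    obtain ⟨x, rfl⟩ := ρ.surjective i
    obtain ⟨y, rfl⟩ := ρ.surjective j
    have hxy : B (ρ x) (ρ y) ≠ 0 := fun h => by simp [h] at hij
    rcases (hadj x y).mp hxy with rfl | rfl
    · exact ⟨x, hij⟩
    · exact ⟨y, by rwa [hB, abs_neg] at hij⟩

end CycleQuiver

/-- a non-oriented cycle which is not simply-laced is of infinite
mutation type. -/
theorem stmt2 {m : ℕ} (B : Matrix (Fin m) (Fin m) ℤ) (hB : IsSkewQ B)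
    (hcyc : IsNonOrientedCycleMat B) (hw : ∃ i j, 2 ≤ |B i j|) :
    ¬ FiniteMutationType B := by
  obtain ⟨⟨hm, ρ, hadj⟩, hnor⟩ := hcyc
  obtain ⟨n, rfl⟩ : ∃ n, m = n + 2 := ⟨m - 2, by omega⟩
  let φ := ZMod.finEquiv (n + 2)
  have he i j : B (ρ (φ i)) (ρ (φ j)) ≠ 0 ↔ (j = i + 1 ∨ i = j + 1) := by
    simp only [hadj, ← map_one φ, ← map_add, φ.injective.eq_iff]
  have hmh := (mixedHeavy_of_isNonOrientedCycleMat hB hm ρ hadj hnor hw).comp_equiv φ.toEquiv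
  intro hfin
  have h := hfin.submatrix (ρ.injective.comp φ.injective)
  rw [submatrix_eq_cycleMatrix (e := ρ ∘ φ) hB he] at h
  refine not_finiteMutationType_cycleMatrix (by omega) ?_ h
  simpa [Function.comp_def] using hmh
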